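/- (Lower bound LB₃.) Let x be a schedule and let r : Fin n → ℝ with r j ≥ 0 for all j, n ≥ 1. For every job j let E_j(r) = { t : r t ≥ r j }, let γ_j = |E_j(r)|, λ_j = ⌈γ_j / m⌉, and p_w = min over t ∈ E_j(r) of ( min over machines i of p i t ). Then for every job j, C_max(x,r) ≥ min over t ∈ E_j(r) of r t + λ_j · p_w. In particular C*(r) ≥ LB₃(r) where LB₃(r) is the maximum of this quantity over all jobs j. -/

import Mathlib

open Finset

/-- A schedule assigns to each machine a finite sequence of jobs such that
every job occurs exactly once among all the sequences. -/
structure Schedule (m n : ℕ) where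
  seq : Fin m → List (Fin n)
  valid : ∀ j : Fin n, (∑ i : Fin m, (seq i).count j) = 1

variable {m n : ℕ}

/-- Completion time after processing the list `L` of jobs on a machine with
processing times `q` and release dates `r`; recursively `C₀ = 0`,
`C_k = q j_k + max C_{k-1} (r j_k)`. -/
def mComp (q r : Fin n → ℝ) (L : List (Fin n)) : ℝ :=
  L.foldl (fun c j => q j + max c (r j)) 0

/-- Makespan of the schedule `x` under the release dates `r`. -/
noncomputable def Cmax (p : Fin m → Fin n → ℝ) (x : Schedule m n) (r : Fin n → ℝ) : ℝ :=
  ⨆ i : Fin m, mComp (p i) r (x.seq i)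

/-- Optimal makespan `C*(r)`: the minimum of `Cmax` over all schedules. -/
noncomputable def Cstar (p : Fin m → Fin n → ℝ) (r : Fin n → ℝ) : ℝ :=
  ⨅ x : Schedule m n, Cmax p x r

/-- Regret of schedule `x` under scenario `r`. -/
noncomputable def regret (p : Fin m → Fin n → ℝ) (x : Schedule m n) (r : Fin n → ℝ) : ℝ :=
  Cmax p x r - Cstar p r

/-- The scenario box determined by the interval bounds. -/
def box (rlo rhi : Fin n → ℝ) : Set (Fin n → ℝ) :=
  {r | ∀ j, rlo j ≤ r j ∧ r j ≤ rhi j}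

/-- Worst-case regret `Z(x)`. -/
noncomputable def Zreg (p : Fin m → Fin n → ℝ) (x : Schedule m n) (rlo rhi : Fin n → ℝ) : ℝ :=
  sSup ((fun r => regret p x r) '' box rlo rhi)

/-- Extreme scenario `r̄^j`. -/
def extSc (rlo rhi : Fin n → ℝ) (j : Fin n) : Fin n → ℝ :=
  Function.update rlo j (rhi j)

/-- The set `H(x)` of jobs whose release interval is covered by the
processing of their predecessors (positions are 0-indexed: job at position
`k ≥ 1` has predecessors `(x.seq i).take k`). -/
def Hset (p : Fin m → Fin n → ℝ) (rlo rhi : Fin n → ℝ) (x : Schedule m n) : Set (Fin n) :=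
  {j | ∃ i : Fin m, ∃ k : ℕ, 1 ≤ k ∧ (x.seq i)[k]? = some j ∧
    rhi j ≤ mComp (p i) rlo ((x.seq i).take k)}

/-- Lower bound `LB₁(r) = max_j (r j + min_i p i j)`. -/
noncomputable def LB1 (p : Fin m → Fin n → ℝ) (r : Fin n → ℝ) : ℝ :=
  ⨆ j : Fin n, (r j + ⨅ i : Fin m, p i j)

/-- Lower bound `LB(r) = min_j r j + m⁻¹ ∑_j min_i p i j`. -/
noncomputable def LB0 (p : Fin m → Fin n → ℝ) (r : Fin n → ℝ) : ℝ :=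
  (⨅ j : Fin n, r j) + (m : ℝ)⁻¹ * ∑ j : Fin n, ⨅ i : Fin m, p i j

/-- `E_j(r)`: the jobs unavailable before `j`. -/
noncomputable def Ej (r : Fin n → ℝ) (j : Fin n) : Finset (Fin n) :=
  Finset.univ.filter fun t => r j ≤ r t

lemma Ej_nonempty (r : Fin n → ℝ) (j : Fin n) : (Ej r j).Nonempty :=
  ⟨j, by simp [Ej]⟩

/-- `W_j(E_j(r), p)` from the paper. -/
noncomputable def W2 (p : Fin m → Fin n → ℝ) (r : Fin n → ℝ) (j : Fin n) : ℝ :=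
  (Ej r j).inf' (Ej_nonempty r j) r + (m : ℝ)⁻¹ * ∑ t ∈ Ej r j, ⨅ i : Fin m, p i t

/-- Lower bound `LB₂(r)`. -/
noncomputable def LB2 (p : Fin m → Fin n → ℝ) (r : Fin n → ℝ) : ℝ :=
  ⨆ j : Fin n, W2 p r j

/-- `W̃_j(E_j(r), p_w)` from the paper, with `λ_j = ⌈|E_j(r)|/m⌉`. -/
noncomputable def W3 (p : Fin m → Fin n → ℝ) (r : Fin n → ℝ) (j : Fin n) : ℝ :=
  (Ej r j).inf' (Ej_nonempty r j) r +
    (⌈((Ej r j).card : ℝ) / (m : ℝ)⌉ : ℝ) *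
      (Ej r j).inf' (Ej_nonempty r j) (fun t => ⨅ i : Fin m, p i t)

/-- Lower bound `LB₃(r)`. -/
noncomputable def LB3 (p : Fin m → Fin n → ℝ) (r : Fin n → ℝ) : ℝ :=
  ⨆ j : Fin n, W3 p r j

/-- The combined lower bound `LB(r̄) = max {LB₁, LB₂, LB₃}`. -/
noncomputable def LBall (p : Fin m → Fin n → ℝ) (r : Fin n → ℝ) : ℝ :=
  max (LB1 p r) (max (LB2 p r) (LB3 p r))

/-! Every job of `E_j(r)` is released no earlier than `r j`, which is also the least release date
in `E_j(r)`. A machine that processes `k ≥ 1` jobs of `E_j(r)` starts the first of them no earlier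
than `r j` and spends at least `p_w` on each, so it finishes no earlier than `r j + k · p_w`. Since
the schedule distributes the `|E_j(r)|` jobs over `m` machines, some machine gets
`k ≥ ⌈|E_j(r)| / m⌉` of them. -/

lemma List.countP_mem_eq_sum_count {α : Type*} [DecidableEq α] (E : Finset α) (L : List α) :
    L.countP (· ∈ E) = ∑ t ∈ E, L.count t := by
  induction L with
  | nil => simp
  | cons a L ih => simp [List.countP_cons, List.count_cons, Finset.sum_add_distrib, ih]

lemma ceil_natCast_div_le_of_le_mul {a b k : ℕ} (h : a ≤ b * k) :
    (⌈(a : ℝ) / b⌉ : ℝ) ≤ k := by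
  have : (a : ℝ) / b ≤ k :=
    div_le_of_le_mul₀ b.cast_nonneg k.cast_nonneg (by rw [mul_comm]; exact_mod_cast h)
  exact_mod_cast Int.ceil_le.mpr (by exact_mod_cast this)

lemma Ej_inf'_self (r : Fin n → ℝ) (j : Fin n) : (Ej r j).inf' (Ej_nonempty r j) r = r j :=
  le_antisymm (inf'_le _ (by simp [Ej])) (le_inf' _ _ fun _ ht => (mem_filter.mp ht).2)

lemma mComp_append_singleton (q r : Fin n → ℝ) (L : List (Fin n)) (a : Fin n) :
    mComp q r (L ++ [a]) = q a + max (mComp q r L) (r a) := by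
  simp [mComp]

lemma mComp_nonneg {q : Fin n → ℝ} (hq : ∀ t, 0 ≤ q t) (r : Fin n → ℝ)
    (L : List (Fin n)) : 0 ≤ mComp q r L := by
  induction L using List.reverseRecOn with
  | nil => simp [mComp]
  | append_singleton L a ih =>
    rw [mComp_append_singleton]
    linarith [hq a, le_max_left (mComp q r L) (r a)]

lemma add_countP_mul_le_mComp {q r : Fin n → ℝ} (hq : ∀ t, 0 ≤ q t) {E : Finset (Fin n)}
    {ρ π : ℝ} (hρ : ∀ t ∈ E, ρ ≤ r t) (hπ : ∀ t ∈ E, π ≤ q t) {L : List (Fin n)}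
    (hL : 0 < L.countP (· ∈ E)) : ρ + L.countP (· ∈ E) * π ≤ mComp q r L := by
  induction L using List.reverseRecOn with
  | nil => simp at hL
  | append_singleton L a ih =>
    rw [List.countP_append, List.countP_singleton] at hL ⊢
    rw [mComp_append_singleton]
    by_cases ha : a ∈ E
    · rcases (L.countP (· ∈ E)).eq_zero_or_pos with h0 | hpos
      · simp only [h0, ha, decide_true, if_true]
        push_cast
        linarith [hρ a ha, hπ a ha, le_max_right (mComp q r L) (r a)]
      · simp only [ha, decide_true, if_true]
        push_cast
        linarith [ih hpos, hπ a ha, le_max_left (mComp q r L) (r a)]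
    · simp only [ha, decide_false, Bool.false_eq_true, if_false, add_zero] at hL ⊢
      linarith [ih hL, hq a, le_max_left (mComp q r L) (r a)]

namespace Schedule

lemma sum_countP_eq_card (x : Schedule m n) (E : Finset (Fin n)) :
    ∑ i, (x.seq i).countP (· ∈ E) = E.card := by
  simp only [List.countP_mem_eq_sum_count]
  rw [Finset.sum_comm]
  simp [x.valid]

lemma exists_card_le_mul_countP (x : Schedule m n) {E : Finset (Fin n)} (hE : E.Nonempty) :
    ∃ i, E.card ≤ m * (x.seq i).countP (· ∈ E) := by
  have hm : (univ : Finset (Fin m)).Nonempty := by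
    obtain ⟨t, -⟩ := hE
    by_contra h
    simpa [not_nonempty_iff_eq_empty.mp h] using x.valid t
  obtain ⟨i, -, hi⟩ := exists_le_of_sum_le hm (f := fun _ => E.card)
    (g := fun i => m * (x.seq i).countP (· ∈ E)) (by simp [← mul_sum, sum_countP_eq_card])
  exact ⟨i, hi⟩

end Schedule

lemma Cmax_nonneg {p : Fin m → Fin n → ℝ} (hp : ∀ i j, 0 ≤ p i j) (x : Schedule m n)
    (r : Fin n → ℝ) : 0 ≤ Cmax p x r :=
  Real.iSup_nonneg fun i => mComp_nonneg (hp i) r _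

lemma W3_le_Cmax {p : Fin m → Fin n → ℝ} (hp : ∀ i j, 0 ≤ p i j) (x : Schedule m n)
    (r : Fin n → ℝ) (j : Fin n) : W3 p r j ≤ Cmax p x r := by
  set E := Ej r j
  set π := E.inf' (Ej_nonempty r j) fun t => ⨅ i, p i t
  have hπ : 0 ≤ π := le_inf' _ _ fun t _ => Real.iInf_nonneg fun i => hp i t
  have hπE : ∀ i, ∀ t ∈ E, π ≤ p i t := fun i t ht =>
    (inf'_le _ ht).trans (ciInf_le (Set.finite_range _).bddBelow i)
  obtain ⟨i, hi⟩ := x.exists_card_le_mul_countP (Ej_nonempty r j)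
  have hpos : 0 < (x.seq i).countP (· ∈ E) :=
    Nat.pos_of_mul_pos_left ((card_pos.mpr (Ej_nonempty r j)).trans_le hi)
  calc W3 p r j = r j + (⌈(E.card : ℝ) / m⌉ : ℝ) * π := by rw [W3, Ej_inf'_self]
    _ ≤ r j + (x.seq i).countP (· ∈ E) * π := by
      gcongr; exact ceil_natCast_div_le_of_le_mul hi
    _ ≤ mComp (p i) r (x.seq i) :=
      add_countP_mul_le_mComp (hp i) (fun t ht => (mem_filter.mp ht).2) (hπE i) hpos
    _ ≤ Cmax p x r :=
      le_ciSup (f := fun i => mComp (p i) r (x.seq i)) (Set.finite_range _).bddAbove i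

theorem lower_bound_LB3_general {m n : ℕ}
    (p : Fin m → Fin n → ℝ) (hp : ∀ i j, 0 < p i j)
    (x : Schedule m n) (r : Fin n → ℝ) :
    (∀ j : Fin n, W3 p r j ≤ Cmax p x r) ∧ LB3 p r ≤ Cstar p r := by
  have hp' : ∀ i j, 0 ≤ p i j := fun i j => (hp i j).le
  refine ⟨W3_le_Cmax hp' x r, ?_⟩
  have : Nonempty (Schedule m n) := ⟨x⟩
  exact le_ciInf fun y => Real.iSup_le (W3_le_Cmax hp' y r) (Cmax_nonneg hp' y r)

/-- Lower bound LB₃: for every job `j`,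
`min_{t ∈ E_j(r)} r t + ⌈|E_j(r)|/m⌉ · min_{t ∈ E_j(r)} min_i p i t` is a
lower bound on the makespan; hence `C*(r) ≥ LB₃(r)`. -/
theorem lower_bound_LB3 {m n : ℕ} (hm : 0 < m) (hn : 1 ≤ n)
    (p : Fin m → Fin n → ℝ) (hp : ∀ i j, 0 < p i j)
    (x : Schedule m n) (r : Fin n → ℝ) (hr : ∀ j, 0 ≤ r j) :
    (∀ j : Fin n, W3 p r j ≤ Cmax p x r) ∧ LB3 p r ≤ Cstar p r :=
  lower_bound_LB3_general p hp x r
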